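/- With the same definitions, f^{1,i}(p^{(j+i)/2} z) · f^{1,j}(z) = f^{1,j+i}(p^{i/2} z) · γ(p^{j/2} z) holds as formal power series in z, for all integers i, j ≥ 1 with i, j, i+j ≤ N-1, where γ(p^{1/2} w) = (1-qw)(1-t^{-1}w)/((1-w)(1-pw)) is expanded as a power series. -/

import Mathlib

open PowerSeries

/-- Exponential of a formal power series (meaningful when the constant term is zero). -/
noncomputable def pexp {K : Type*} [Field K] (S : PowerSeries K) : PowerSeries K :=
  PowerSeries.mk fun n => ∑ k ∈ Finset.range (n + 1),
    PowerSeries.coeff n (S ^ k) / (Nat.factorial k : K)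

/-- The structure function `f^{i,j}(z)` of the deformed `W_N` algebra,
with `p = q t⁻¹` and `sp` a square root of `p` (so `p^{1/2} = sp`). -/
noncomputable def fser {K : Type*} [Field K] (q t sp : K) (N i j : ℤ) : PowerSeries K :=
  pexp (PowerSeries.mk fun n => if n = 0 then 0 else
    (1 / (n : K)) * (1 - q ^ (n : ℤ)) * (1 - t ^ (-(n : ℤ))) *
      ((1 - (q * t⁻¹) ^ (min i j * (n : ℤ))) / (1 - (q * t⁻¹) ^ (n : ℤ))) *
      ((1 - (q * t⁻¹) ^ ((N - max i j) * (n : ℤ))) / (1 - (q * t⁻¹) ^ (N * (n : ℤ)))) *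
      sp ^ (|i - j| * (n : ℤ)))

/-- The geometric series `1/(1 - c z) = ∑_{n ≥ 0} c^n z^n`. -/
noncomputable def geom {K : Type*} [Field K] (c : K) : PowerSeries K :=
  PowerSeries.mk fun n => c ^ n

/-- `γ(p^{1/2}·(a z)) = (1 - q a z)(1 - t⁻¹ a z)/((1 - a z)(1 - p a z))`,
expanded as a formal power series in `z` (geometric series for the denominators);
here `p = sp^2`. -/
noncomputable def gammaSer {K : Type*} [Field K] (q t sp a : K) : PowerSeries K :=
  (1 - PowerSeries.C (q * a) * PowerSeries.X) *
    (1 - PowerSeries.C (t⁻¹ * a) * PowerSeries.X) * geom a * geom (sp ^ 2 * a)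

section Aux
open Finset
variable {K : Type*} [Field K]


lemma coeff_pexp (S : PowerSeries K) (n : ℕ) :
    coeff n (pexp S) = ∑ k ∈ range (n + 1), coeff n (S ^ k) / (Nat.factorial k : K) := by
  simp [pexp]

lemma coeff_pow_eq_zero {S : PowerSeries K} (hS : constantCoeff S = 0) {n k : ℕ}
    (h : n < k) : coeff n (S ^ k) = 0 :=
  PowerSeries.X_pow_dvd_iff.mp (pow_dvd_pow_of_dvd (PowerSeries.X_dvd_iff.mpr hS) k) n h

lemma coeff_pexp_of_le {S : PowerSeries K} (hS : constantCoeff S = 0) {n m : ℕ} (h : n ≤ m) :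
    coeff n (pexp S) = ∑ k ∈ range (m + 1), coeff n (S ^ k) / (Nat.factorial k : K) := by
  rw [coeff_pexp]
  refine Finset.sum_subset (Finset.range_subset_range.mpr (by omega)) fun k hk hk2 => ?_
  rw [coeff_pow_eq_zero hS (by simp at hk hk2; omega), zero_div]

lemma constantCoeff_pexp (S : PowerSeries K) : constantCoeff (pexp S) = 1 := by
  rw [← coeff_zero_eq_constantCoeff_apply, coeff_pexp]
  simp

lemma derivative_pexp [CharZero K] (S : PowerSeries K) (hS : constantCoeff S = 0) :
    d⁄dX K (pexp S) = d⁄dX K S * pexp S := by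
  ext n
  rw [coeff_derivative, coeff_pexp]
  have hR : coeff n (d⁄dX K S * pexp S)
      = ∑ k ∈ range (n + 1), coeff n (d⁄dX K S * S ^ k) / (Nat.factorial k : K) := by
    rw [coeff_mul]
    have : ∀ p ∈ antidiagonal n, coeff p.1 (d⁄dX K S) * coeff p.2 (pexp S)
        = ∑ k ∈ range (n + 1), coeff p.1 (d⁄dX K S) * coeff p.2 (S ^ k) / (Nat.factorial k : K) := by
      intro p hp
      rw [coeff_pexp_of_le (m := n) hS (HasAntidiagonal.antidiagonal.snd_le hp),
        Finset.mul_sum]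
      simp [mul_div_assoc]
    rw [Finset.sum_congr rfl this, Finset.sum_comm]
    refine Finset.sum_congr rfl fun k _ => ?_
    rw [coeff_mul, Finset.sum_div]
  rw [hR]
  rw [Finset.sum_range_succ', add_mul, Finset.sum_mul]
  have h0 : coeff (n + 1) (S ^ 0) = 0 := by simp
  rw [h0, zero_div, zero_mul, add_zero]
  refine Finset.sum_congr rfl fun k _ => ?_
  have key : coeff (n + 1) (S ^ (k + 1)) * ((n : K) + 1)
      = ((k : K) + 1) * coeff n (d⁄dX K S * S ^ k) := by
    have h2 := coeff_derivative (S ^ (k + 1)) n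
    rw [Derivation.leibniz_pow] at h2
    rw [← h2, map_nsmul, nsmul_eq_mul]
    push_cast
    congr 1
    rw [smul_eq_mul, mul_comm]
  have hf : ((k.factorial : K)) ≠ 0 := Nat.cast_ne_zero.mpr (Nat.factorial_ne_zero _)
  have hf1 : (((k + 1).factorial : K)) ≠ 0 := Nat.cast_ne_zero.mpr (Nat.factorial_ne_zero _)
  rw [div_mul_eq_mul_div, div_eq_div_iff hf1 hf, Nat.factorial_succ]
  push_cast
  push_cast at key
  linear_combination ((k.factorial : K)) * key

lemma eq_of_derivative_eq [CharZero K] {F G g : PowerSeries K}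
    (h0 : constantCoeff F = constantCoeff G)
    (hF : d⁄dX K F = g * F) (hG : d⁄dX K G = g * G) : F = G := by
  ext n
  induction n using Nat.strong_induction_on with
  | _ n ih =>
    match n with
    | 0 => simpa using h0
    | n + 1 =>
      have hF' := congrArg (coeff n) hF
      have hG' := congrArg (coeff n) hG
      rw [coeff_derivative] at hF' hG'
      have hs : coeff n (g * F) = coeff n (g * G) := by
        rw [coeff_mul, coeff_mul]
        refine Finset.sum_congr rfl fun p hp => ?_
        rw [ih p.2 (by have := HasAntidiagonal.antidiagonal.snd_le hp; omega)]
      have hn : ((n : K) + 1) ≠ 0 := Nat.cast_add_one_ne_zero n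
      have := hF'.trans (hs.trans hG'.symm)
      exact mul_right_cancel₀ hn this

lemma pexp_mul_pexp [CharZero K] {S T : PowerSeries K} (hS : constantCoeff S = 0)
    (hT : constantCoeff T = 0) : pexp S * pexp T = pexp (S + T) := by
  have hST : constantCoeff (S + T) = 0 := by rw [map_add, hS, hT, add_zero]
  refine eq_of_derivative_eq (g := d⁄dX K S + d⁄dX K T) ?_ ?_ ?_
  · rw [map_mul, constantCoeff_pexp, constantCoeff_pexp, constantCoeff_pexp, one_mul]
  · rw [Derivation.leibniz, smul_eq_mul, smul_eq_mul, derivative_pexp S hS,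
      derivative_pexp T hT]
    ring
  · rw [derivative_pexp _ hST, map_add]

lemma rescale_pexp (r : K) (S : PowerSeries K) :
    PowerSeries.rescale r (pexp S) = pexp (PowerSeries.rescale r S) := by
  ext n
  rw [coeff_rescale, coeff_pexp, coeff_pexp, Finset.mul_sum]
  refine Finset.sum_congr rfl fun k _ => ?_
  rw [← map_pow, coeff_rescale, mul_div_assoc]

lemma constantCoeff_rescale (r : K) (S : PowerSeries K) :
    constantCoeff (PowerSeries.rescale r S) = constantCoeff S := by
  rw [← coeff_zero_eq_constantCoeff_apply, ← coeff_zero_eq_constantCoeff_apply,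
    coeff_rescale, pow_zero, one_mul]

noncomputable def glog (c : K) : PowerSeries K :=
  PowerSeries.mk fun n => if n = 0 then 0 else c ^ n / n

noncomputable def nlog (c : K) : PowerSeries K :=
  PowerSeries.mk fun n => if n = 0 then 0 else -(c ^ n / n)

lemma constantCoeff_glog (c : K) : constantCoeff (glog c) = 0 := by
  rw [← coeff_zero_eq_constantCoeff_apply, glog, coeff_mk, if_pos rfl]

lemma constantCoeff_nlog (c : K) : constantCoeff (nlog c) = 0 := by
  rw [← coeff_zero_eq_constantCoeff_apply, nlog, coeff_mk, if_pos rfl]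

lemma derivative_glog [CharZero K] (c : K) : d⁄dX K (glog c) = C c * geom c := by
  ext n
  rw [coeff_derivative, glog, coeff_mk, if_neg (Nat.succ_ne_zero n), coeff_C_mul, geom,
    coeff_mk, pow_succ']
  have hn : ((n : K) + 1) ≠ 0 := Nat.cast_add_one_ne_zero n
  push_cast
  field_simp

lemma derivative_nlog [CharZero K] (c : K) : d⁄dX K (nlog c) = -(C c * geom c) := by
  ext n
  rw [coeff_derivative, nlog, coeff_mk, if_neg (Nat.succ_ne_zero n), map_neg, coeff_C_mul,
    geom, coeff_mk, pow_succ']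
  have hn : ((n : K) + 1) ≠ 0 := Nat.cast_add_one_ne_zero n
  push_cast
  field_simp

lemma sub_mul_geom (c : K) : (1 - C c * X) * geom c = 1 := by
  ext n
  rw [sub_mul, one_mul, map_sub]
  cases n with
  | zero => simp [geom]
  | succ n =>
    rw [mul_assoc, coeff_C_mul, coeff_succ_X_mul, geom, coeff_mk, coeff_mk, pow_succ',
      coeff_one, if_neg (Nat.succ_ne_zero n), sub_self]

lemma derivative_geom [CharZero K] (c : K) :
    d⁄dX K (geom c) = C c * geom c * geom c := by
  ext n
  rw [coeff_derivative, geom, coeff_mk, mul_assoc, coeff_C_mul, coeff_mul]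
  have : ∀ p ∈ antidiagonal n, coeff p.1 (PowerSeries.mk fun n => c ^ n) *
      coeff p.2 (PowerSeries.mk fun n => c ^ n) = c ^ n := by
    intro p hp
    rw [coeff_mk, coeff_mk, ← pow_add, (Finset.HasAntidiagonal.mem_antidiagonal.mp hp)]
  rw [Finset.sum_congr rfl this, Finset.sum_const, Finset.Nat.card_antidiagonal,
    nsmul_eq_mul, pow_succ']
  push_cast
  ring

lemma geom_eq_pexp [CharZero K] (c : K) : geom c = pexp (glog c) := by
  refine eq_of_derivative_eq (g := C c * geom c) ?_ ?_ ?_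
  · rw [constantCoeff_pexp, ← coeff_zero_eq_constantCoeff_apply, geom, coeff_mk, pow_zero]
  · rw [derivative_geom c]
  · rw [derivative_pexp _ (constantCoeff_glog c), derivative_glog]

lemma sub_eq_pexp [CharZero K] (c : K) : 1 - C c * X = pexp (nlog c) := by
  refine eq_of_derivative_eq (g := -(C c * geom c)) ?_ ?_ ?_
  · rw [constantCoeff_pexp]; simp
  · have h1 : d⁄dX K (1 - C c * X) = -(C c) := by
      rw [map_sub, Derivation.leibniz]; simp
    rw [h1, neg_mul, mul_assoc, mul_comm (geom c), sub_mul_geom c, mul_one]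
  · rw [derivative_pexp _ (constantCoeff_nlog c), derivative_nlog]

end Aux

lemma fusion_alg {K : Type*} [Field K] (nn al be XX YY MM WW ZZ VV : K)
    (hnK : nn ≠ 0) (hDne : 1 - XX * YY * MM ≠ 0) (hZ : ZZ ≠ 0) (hV : VV ≠ 0) :
    ZZ * (1 / nn * (1 - al) * (1 - be) * 1 * ((1 - YY * MM) / (1 - XX * YY * MM)) * (XX * WW / ZZ)) +
      1 / nn * (1 - al) * (1 - be) * 1 * ((1 - XX * MM) / (1 - XX * YY * MM)) * WW =
    VV * (1 / nn * (1 - al) * (1 - be) * 1 * ((1 - MM) / (1 - XX * YY * MM)) * (XX * WW / VV)) +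
      (-(al * WW / nn) + -(be * WW / nn) + WW / nn + al * be * WW / nn) := by
  have hnD : nn * (1 - XX * YY * MM) ≠ 0 := mul_ne_zero hnK hDne
  have e1 : ZZ * (1 / nn * (1 - al) * (1 - be) * 1 * ((1 - YY * MM) / (1 - XX * YY * MM)) * (XX * WW / ZZ))
      = (1 - al) * (1 - be) * (1 - YY * MM) * XX * WW / (nn * (1 - XX * YY * MM)) := by
    field_simp
  have e2 : 1 / nn * (1 - al) * (1 - be) * 1 * ((1 - XX * MM) / (1 - XX * YY * MM)) * WW
      = (1 - al) * (1 - be) * (1 - XX * MM) * WW / (nn * (1 - XX * YY * MM)) := by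
    field_simp
  have e3 : VV * (1 / nn * (1 - al) * (1 - be) * 1 * ((1 - MM) / (1 - XX * YY * MM)) * (XX * WW / VV))
      = (1 - al) * (1 - be) * (1 - MM) * XX * WW / (nn * (1 - XX * YY * MM)) := by
    field_simp
  have e4 : (-(al * WW / nn) + -(be * WW / nn) + WW / nn + al * be * WW / nn)
      = (1 - al) * (1 - be) * (1 - XX * YY * MM) * WW / (nn * (1 - XX * YY * MM)) := by
    rw [eq_div_iff hnD]
    field_simp
    ring
  rw [e1, e2, e3, e4, ← add_div, ← add_div, div_eq_div_iff hnD hnD]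
  ring

set_option maxHeartbeats 1000000 in
/-- The identity `f^{1,i}(p^{(j+i)/2} z) · f^{1,j}(z) = f^{1,j+i}(p^{i/2} z) · γ(p^{j/2} z)`
for integers `i, j ≥ 1` with `i, j, i+j ≤ N-1`, where
`γ(p^{j/2} z) = (1-q p^{(j-1)/2} z)(1-t⁻¹ p^{(j-1)/2} z)/((1-p^{(j-1)/2} z)(1-p^{(j+1)/2} z))`
is expanded as a formal power series in `z`. -/
theorem fser_fusion_gamma' {K : Type*} [Field K] [CharZero K] (q t sp : K) (N : ℤ) (hN : 2 ≤ N)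
    (hq : q ≠ 0) (ht : t ≠ 0) (hsp : sp ^ 2 = q * t⁻¹)
    (hp : ∀ n : ℤ, n ≠ 0 → (q * t⁻¹) ^ n ≠ 1)
    (i j : ℤ) (hi : 1 ≤ i) (hj : 1 ≤ j) (hi2 : i ≤ N - 1) (hj2 : j ≤ N - 1)
    (hij : i + j ≤ N - 1) :
    PowerSeries.rescale (sp ^ (j + i)) (fser q t sp N 1 i) * fser q t sp N 1 j =
      PowerSeries.rescale (sp ^ i) (fser q t sp N 1 (j + i)) *
        gammaSer q t sp (sp ^ (j - 1)) := by
  have hP : q * t⁻¹ ≠ 0 := mul_ne_zero hq (inv_ne_zero ht)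
  have hsp0 : sp ≠ 0 := by
    intro h
    apply hP
    rw [← hsp, h]
    ring
  set A : ℤ → PowerSeries K := fun k => PowerSeries.mk fun n => if n = 0 then 0 else
    (1 / (n : K)) * (1 - q ^ (n : ℤ)) * (1 - t ^ (-(n : ℤ))) *
      ((1 - (q * t⁻¹) ^ (min 1 k * (n : ℤ))) / (1 - (q * t⁻¹) ^ (n : ℤ))) *
      ((1 - (q * t⁻¹) ^ ((N - max 1 k) * (n : ℤ))) / (1 - (q * t⁻¹) ^ (N * (n : ℤ)))) *
      sp ^ (|1 - k| * (n : ℤ)) with hA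
  have hfser : ∀ k : ℤ, fser q t sp N 1 k = pexp (A k) := fun k => rfl
  have hA0 : ∀ k : ℤ, constantCoeff (A k) = 0 := by
    intro k
    rw [← coeff_zero_eq_constantCoeff_apply, hA]
    simp
  rw [hfser, hfser, hfser, rescale_pexp, rescale_pexp, gammaSer,
    sub_eq_pexp (q * sp ^ (j - 1)), sub_eq_pexp (t⁻¹ * sp ^ (j - 1)), geom_eq_pexp, geom_eq_pexp,
    pexp_mul_pexp (constantCoeff_nlog _) (constantCoeff_nlog _),
    pexp_mul_pexp (by rw [map_add, constantCoeff_nlog, constantCoeff_nlog, add_zero]) (constantCoeff_glog _),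
    pexp_mul_pexp (by rw [map_add, map_add, constantCoeff_nlog, constantCoeff_nlog, constantCoeff_glog]; ring) (constantCoeff_glog _),
    pexp_mul_pexp (by rw [constantCoeff_rescale]; exact hA0 i) (hA0 j),
    pexp_mul_pexp (by rw [constantCoeff_rescale]; exact hA0 (j + i))
      (by rw [map_add, map_add, map_add, constantCoeff_nlog, constantCoeff_nlog,
        constantCoeff_glog, constantCoeff_glog]; ring)]
  refine congrArg pexp ?_
  ext n
  simp only [map_add, coeff_rescale, hA, glog, nlog, coeff_mk]
  rcases eq_or_ne n 0 with rfl | hn0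
  · simp
  simp only [if_neg hn0]
  have he : (n : ℤ) ≠ 0 := Int.natCast_ne_zero.mpr hn0
  have hnK : (n : K) ≠ 0 := Nat.cast_ne_zero.mpr hn0
  have hs0 : sp ^ (n : ℤ) ≠ 0 := zpow_ne_zero _ hsp0
  have hu0 : (q * t⁻¹) ^ (n : ℤ) ≠ 0 := zpow_ne_zero _ hP
  have habsi : |1 - i| = i - 1 := by rw [abs_sub_comm]; exact abs_of_nonneg (by omega)
  have habsj : |1 - j| = j - 1 := by rw [abs_sub_comm]; exact abs_of_nonneg (by omega)
  have habsij : |1 - (j + i)| = j + i - 1 := by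
    rw [abs_sub_comm]; exact abs_of_nonneg (by omega)
  rw [min_eq_left hi, min_eq_left hj, min_eq_left (by omega : (1:ℤ) ≤ j + i),
    max_eq_right hi, max_eq_right hj, max_eq_right (by omega : (1:ℤ) ≤ j + i),
    habsi, habsj, habsij, one_mul]
  have hd1 : (1 : K) - (q * t⁻¹) ^ (n : ℤ) ≠ 0 := sub_ne_zero.mpr (Ne.symm (hp _ he))
  rw [div_self hd1]
  have hupow : ∀ k : ℤ, (q * t⁻¹) ^ (k * (n : ℤ)) = ((q * t⁻¹) ^ (n : ℤ)) ^ k := fun k => by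
    rw [mul_comm k, zpow_mul]
  have hspow : ∀ k : ℤ, sp ^ (k * (n : ℤ)) = (sp ^ (n : ℤ)) ^ k := fun k => by
    rw [mul_comm k, zpow_mul]
  have hzz : ∀ k : ℤ, (sp ^ k) ^ (n : ℤ) = (sp ^ (n : ℤ)) ^ k := fun k => by
    rw [← zpow_mul, mul_comm, zpow_mul]
  have hs2 : (sp ^ (n : ℤ)) ^ (2 : ℤ) = (q * t⁻¹) ^ (n : ℤ) := by
    rw [← hsp, ← zpow_natCast sp 2, ← zpow_mul, ← zpow_mul]
    congr 1
    push_cast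
    ring
  have hSU : ∀ l : ℤ, (sp ^ (n : ℤ)) ^ (2 * l) = ((q * t⁻¹) ^ (n : ℤ)) ^ l := fun l => by
    rw [zpow_mul, hs2]
  have hUN : ((q * t⁻¹) ^ (n : ℤ)) ^ N = ((q * t⁻¹) ^ (n : ℤ)) ^ i * ((q * t⁻¹) ^ (n : ℤ)) ^ j
      * ((q * t⁻¹) ^ (n : ℤ)) ^ (N - i - j) := by
    rw [← zpow_add₀ hu0, ← zpow_add₀ hu0]
    congr 1
    ring
  have hUNi : ((q * t⁻¹) ^ (n : ℤ)) ^ (N - i) = ((q * t⁻¹) ^ (n : ℤ)) ^ j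
      * ((q * t⁻¹) ^ (n : ℤ)) ^ (N - i - j) := by
    rw [← zpow_add₀ hu0]
    congr 1
    ring
  have hUNj : ((q * t⁻¹) ^ (n : ℤ)) ^ (N - j) = ((q * t⁻¹) ^ (n : ℤ)) ^ i
      * ((q * t⁻¹) ^ (n : ℤ)) ^ (N - i - j) := by
    rw [← zpow_add₀ hu0]
    congr 1
    ring
  have hUNij : ((q * t⁻¹) ^ (n : ℤ)) ^ (N - (j + i)) = ((q * t⁻¹) ^ (n : ℤ)) ^ (N - i - j) := by
    congr 1
    ring
  have hSi1 : (sp ^ (n : ℤ)) ^ (i - 1) = ((q * t⁻¹) ^ (n : ℤ)) ^ i * (sp ^ (n : ℤ)) ^ (j - 1)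
      / (sp ^ (n : ℤ)) ^ (j + i) := by
    rw [eq_div_iff (zpow_ne_zero (j + i) hs0), ← hSU i, ← zpow_add₀ hs0, ← zpow_add₀ hs0]
    congr 1
    ring
  have hSji1 : (sp ^ (n : ℤ)) ^ (j + i - 1) = ((q * t⁻¹) ^ (n : ℤ)) ^ i * (sp ^ (n : ℤ)) ^ (j - 1)
      / (sp ^ (n : ℤ)) ^ i := by
    rw [eq_div_iff (zpow_ne_zero i hs0), ← hSU i, ← zpow_add₀ hs0, ← zpow_add₀ hs0]
    congr 1
    ring
  have hDN : (1 : K) - ((q * t⁻¹) ^ (n : ℤ)) ^ N ≠ 0 := by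
    rw [← zpow_mul]
    exact sub_ne_zero.mpr (Ne.symm (hp _ (mul_ne_zero he (by omega))))
  have hDne : (1 : K) - ((q * t⁻¹) ^ (n : ℤ)) ^ i * ((q * t⁻¹) ^ (n : ℤ)) ^ j
      * ((q * t⁻¹) ^ (n : ℤ)) ^ (N - i - j) ≠ 0 := by
    rw [← hUN]
    exact hDN
  rw [hsp]
  simp only [mul_pow]
  simp only [← zpow_natCast]
  simp only [inv_zpow']
  rw [hzz (j + i), hzz i, hzz (j - 1), hupow (N - i), hupow (N - j), hupow (N - (j + i)),
    hupow N, hspow (i - 1), hspow (j - 1), hspow (j + i - 1), hUN, hUNi, hUNj, hUNij,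
    hSi1, hSji1]
  have hZ : (sp ^ (n : ℤ)) ^ (j + i) ≠ 0 := zpow_ne_zero _ hs0
  have hV : (sp ^ (n : ℤ)) ^ i ≠ 0 := zpow_ne_zero _ hs0
  have hUqt : (q * t⁻¹) ^ (n : ℤ) = q ^ (n : ℤ) * t ^ (-(n : ℤ)) := by
    rw [mul_zpow, inv_zpow, zpow_neg]
  rw [hUqt] at hDne ⊢
  set nn : K := (n : K) with hnn
  set al : K := q ^ (n : ℤ) with hal
  set be : K := t ^ (-(n : ℤ)) with hbe
  set XX : K := (al * be) ^ i with hXX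
  set YY : K := (al * be) ^ j with hYY
  set MM : K := (al * be) ^ (N - i - j) with hMM
  set WW : K := (sp ^ (n : ℤ)) ^ (j - 1) with hWW
  set ZZ : K := (sp ^ (n : ℤ)) ^ (j + i) with hZZ
  set VV : K := (sp ^ (n : ℤ)) ^ i with hVV
  clear_value nn al be XX YY MM WW ZZ VV
  exact fusion_alg nn al be XX YY MM WW ZZ VV hnK hDne hZ hV
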